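/- Any fixed function ψ of the operator L_{s,1/2^−}, i.e., any ψ satisfying ψ(y) = (1+y)^{−2s}·ψ(1/(1+y)) + ∑_{i=0}^∞ (2y+2i+1)^{−2s}·ψ((i+y)/(2y+2i+1)) for all y > 0 (with absolute convergence), satisfies the four-term functional equation ψ(y+1) = ψ(y) − (1+y)^{−2s}·ψ(1/(1+y)) + (2+y)^{−2s}·ψ(1/(2+y)) − (2y+1)^{−2s}·ψ(y/(2y+1)). -/
import Mathlib


theorem stmt_19 (s : ℝ) (ψ : ℝ → ℝ)
    (hconv : ∀ y : ℝ, 0 < y →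
      Summable (fun i : ℕ => |(1 / (2 * y + 2 * i + 1) ^ (2 * s)) * ψ ((i + y) / (2 * y + 2 * i + 1))|))
    (hfix : ∀ y : ℝ, 0 < y →
      ψ y = (1 / (1 + y) ^ (2 * s)) * ψ (1 / (1 + y)) +
        ∑' i : ℕ, (1 / (2 * y + 2 * i + 1) ^ (2 * s)) * ψ ((i + y) / (2 * y + 2 * i + 1))) :
    ∀ y : ℝ, 0 < y →
      ψ (y + 1) = ψ y - (1 / (1 + y) ^ (2 * s)) * ψ (1 / (1 + y))
        + (1 / (2 + y) ^ (2 * s)) * ψ (1 / (2 + y))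
        - (1 / (2 * y + 1) ^ (2 * s)) * ψ (y / (2 * y + 1)) := by
  intro y hy
  set f : ℕ → ℝ := fun i : ℕ => (1 / (2 * y + 2 * i + 1) ^ (2 * s)) * ψ ((i + y) / (2 * y + 2 * i + 1)) with hf
  have hs : Summable f := (hconv y hy).of_abs
  have h1 := hfix (y + 1) (by linarith)
  have h2 := hfix y hy
  have hshift : (fun i : ℕ => (1 / (2 * (y + 1) + 2 * i + 1) ^ (2 * s)) *
      ψ ((i + (y + 1)) / (2 * (y + 1) + 2 * i + 1))) = fun i : ℕ => f (i + 1) := by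
    funext i
    simp only [hf]
    push_cast
    ring_nf
  have hzero : ∑' i : ℕ, f i = f 0 + ∑' i : ℕ, f (i + 1) := Summable.tsum_eq_zero_add hs
  rw [hshift] at h1
  have hf0 : f 0 = (1 / (2 * y + 1) ^ (2 * s)) * ψ (y / (2 * y + 1)) := by
    simp [hf]
  have h2' : ∑' i : ℕ, f (i + 1) =
      ψ y - (1 / (1 + y) ^ (2 * s)) * ψ (1 / (1 + y)) - f 0 := by
    have := h2
    rw [hzero] at this
    linarith
  have h1y : (1 : ℝ) + (y + 1) = 2 + y := by ring
  rw [h1y] at h1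
  rw [h1, h2', hf0]
  ring
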